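/- arXiv:2401.13075 — 3 statements merged into one kernel-verified Lean document; each statement's English description precedes it below -/
import Mathlib

section
/- Let f : ℝ × ℝ → ℝ be smooth and suppose φ(r,v) = r · f(r·(κ·v + 1)) for a constant κ. Then for all integers q ≥ p ≥ 0, the derivative ∂_v^q ∂_r^p φ, evaluated at r = 0, equals 0. -/
private lemma iterDeriv_id_mul (h : ℝ → ℝ) (hh : ContDiff ℝ (⊤ : ℕ∞) h) (p : ℕ) :
    iteratedDeriv (p + 1) (fun x : ℝ => x * h x) =
      fun r => (p + 1 : ℝ) * iteratedDeriv p h r + r * iteratedDeriv (p + 1) h r := by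
  induction p with
  | zero =>
    funext r
    rw [iteratedDeriv_succ, iteratedDeriv_zero]
    have hd : DifferentiableAt ℝ h r := (hh.differentiable (by simp)).differentiableAt
    rw [deriv_fun_mul differentiableAt_fun_id hd, deriv_id'']
    norm_num [iteratedDeriv_one]
  | succ p ih =>
    funext r
    have hdp : ∀ n : ℕ, DifferentiableAt ℝ (iteratedDeriv n h) r := fun n =>
      (hh.differentiable_iteratedDeriv n (by exact_mod_cast lt_top_iff_ne_top.2 (by simp))).differentiableAt
    rw [iteratedDeriv_succ, ih]
    have h1 : DifferentiableAt ℝ (fun r => (p + 1 : ℝ) * iteratedDeriv p h r) r :=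
      ((hdp p).const_mul _)
    have h2 : DifferentiableAt ℝ (fun r : ℝ => r * iteratedDeriv (p + 1) h r) r :=
      DifferentiableAt.mul differentiableAt_fun_id (hdp (p + 1))
    rw [deriv_fun_add h1 h2, deriv_const_mul _ (hdp p),
      deriv_fun_mul differentiableAt_fun_id (hdp (p + 1)), deriv_id'']
    have e1 : deriv (iteratedDeriv p h) r = iteratedDeriv (p + 1) h r :=
      (congrFun iteratedDeriv_succ r).symm
    have e2 : deriv (iteratedDeriv (p + 1) h) r = iteratedDeriv (p + 2) h r :=
      (congrFun iteratedDeriv_succ r).symm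
    rw [e1, e2]
    push_cast
    ring

private lemma iterDeriv_affine_pow (κ : ℝ) :
    ∀ m q : ℕ, m < q → ∀ c v : ℝ,
      iteratedDeriv q (fun v : ℝ => c * (κ * v + 1) ^ m) v = 0 := by
  intro m
  induction m with
  | zero =>
    intro q hq c v
    obtain ⟨q', rfl⟩ := Nat.exists_eq_succ_of_ne_zero (by omega : q ≠ 0)
    rw [iteratedDeriv_succ']
    have : deriv (fun v : ℝ => c * (κ * v + 1) ^ 0) = fun _ => (0 : ℝ) := by
      funext x; simp
    rw [this]
    simpa using iteratedDeriv_const_smul (f := fun _ : ℝ => (0 : ℝ)) (n := q')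
      contDiff_const 1 ▸ (by simp [iteratedDeriv_eq_iterate, Function.iterate_fixed] :
        iteratedDeriv q' (fun _ : ℝ => (0 : ℝ)) v = 0)
  | succ m ih =>
    intro q hq c v
    obtain ⟨q', rfl⟩ := Nat.exists_eq_succ_of_ne_zero (by omega : q ≠ 0)
    rw [iteratedDeriv_succ']
    have hder : deriv (fun v : ℝ => c * (κ * v + 1) ^ (m + 1)) =
        fun v : ℝ => (c * (m + 1) * κ) * (κ * v + 1) ^ m := by
      funext x
      have h1 : HasDerivAt (fun v : ℝ => κ * v + 1) κ x := by
        simpa using ((hasDerivAt_id x).const_mul κ).add_const 1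
      have h2 : HasDerivAt (fun v : ℝ => c * (κ * v + 1) ^ (m + 1))
          (c * ((m + 1 : ℕ) * (κ * x + 1) ^ m * κ)) x := (h1.pow (m + 1)).const_mul c
      rw [h2.deriv]; push_cast; ring
    rw [hder]
    exact ih q' (Nat.lt_of_succ_lt_succ hq) _ v

/-- For smooth `f : ℝ → ℝ`, constant `κ`, and
`φ (r, v) = r * f (r * (κ * v + 1))`, all derivatives `∂_v^q ∂_r^p φ` with
`q ≥ p ≥ 0` vanish on the horizon `r = 0`. -/
theorem positive_boost_weight_building_blocks_vanish
    (f : ℝ → ℝ) (hf : ContDiff ℝ (⊤ : ℕ∞) f) (κ : ℝ)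
    (p q : ℕ) (hpq : p ≤ q) (v : ℝ) :
    iteratedDeriv q
      (fun v' : ℝ =>
        iteratedDeriv p (fun r : ℝ => r * f (r * (κ * v' + 1))) 0) v = 0 := by
  obtain _ | p' := p
  · have : (fun v' : ℝ =>
        iteratedDeriv 0 (fun r : ℝ => r * f (r * (κ * v' + 1))) 0) =
        fun _ : ℝ => (0 : ℝ) := by
      funext v'; simp
    rw [this]
    simp [iteratedDeriv_eq_iterate, Function.iterate_fixed]
  · have key : (fun v' : ℝ =>
        iteratedDeriv (p' + 1) (fun r : ℝ => r * f (r * (κ * v' + 1))) 0) =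
        fun v' : ℝ => ((p' + 1 : ℝ) * iteratedDeriv p' f 0) * (κ * v' + 1) ^ p' := by
      funext v'
      set c := κ * v' + 1 with hc
      have hcomm : (fun r : ℝ => r * f (r * c)) = fun r : ℝ => r * f (c * r) := by
        funext r; rw [mul_comm r c]
      have hh : ContDiff ℝ (⊤ : ℕ∞) (fun r : ℝ => f (c * r)) :=
        hf.comp (contDiff_const.mul contDiff_id)
      rw [hcomm, iterDeriv_id_mul _ hh p']
      simp only
      have h1 : iteratedDeriv p' (fun r : ℝ => f (c * r)) 0 =
          c ^ p' * iteratedDeriv p' f 0 := by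
        rw [iteratedDeriv_comp_const_mul (hf.of_le (by exact_mod_cast le_top)) c]
        simp
      rw [h1]
      ring
    rw [key]
    exact iterDeriv_affine_pow κ p' q (Nat.lt_of_succ_le hpq) _ v
end

section
/- Let (C, h) be a compact Riemannian manifold without boundary, c₁ : C → ℝ a smooth function with c₁ > 0 everywhere, ε an antisymmetric smooth (2,0)-tensor field, and f : C → ℝ smooth. If div(c₁·∇f − 8·c₂·ε(∇f, ·)♯) = 0 on C (where c₂ : C → ℝ is smooth), then f is constant, i.e., ∇f = 0. -/
open MeasureTheory Set

section GZL
variable {d : ℕ} {n : WithTop ℕ∞}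

lemma contDiff_matrix_det' (M : (Fin d → ℝ) → Matrix (Fin d) (Fin d) ℝ)
    (hM : ∀ i j, ContDiff ℝ n fun x => M x i j) :
    ContDiff ℝ n fun x => (M x).det := by
  simp only [Matrix.det_apply']
  exact ContDiff.sum fun σ _ => contDiff_const.mul (contDiff_prod fun i _ => hM (σ i) i)

lemma contDiff_matrix_inv' (M : (Fin d → ℝ) → Matrix (Fin d) (Fin d) ℝ)
    (hM : ∀ i j, ContDiff ℝ n fun x => M x i j) (hdet : ∀ x, (M x).det ≠ 0) (i j : Fin d) :
    ContDiff ℝ n fun x => (M x)⁻¹ i j := by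
  have hrw : (fun x => (M x)⁻¹ i j)
      = fun x => ((M x).det)⁻¹ * ((M x).updateRow j (Pi.single i 1)).det := by
    funext x
    rw [Matrix.inv_def, Matrix.smul_apply, Ring.inverse_eq_inv', Matrix.adjugate_apply,
      smul_eq_mul]
  rw [hrw]
  refine ((contDiff_matrix_det' M hM).inv hdet).mul (contDiff_matrix_det' _ fun a b => ?_)
  rcases eq_or_ne a j with rfl | hab
  · simp only [Matrix.updateRow_apply, if_pos rfl]
    exact contDiff_const
  · simp only [Matrix.updateRow_apply, if_neg hab]
    exact hM a b

lemma single_cast_add (k : Fin d) (a : ℤ) :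
    (Pi.single k ((a + 1 : ℤ) : ℝ) : Fin d → ℝ) = Pi.single k (a : ℝ) + Pi.single k 1 := by
  funext j
  rcases eq_or_ne j k with rfl | hj
  · simp only [Pi.add_apply, Pi.single_eq_same]
    push_cast; ring
  · simp [Pi.single_apply, hj]

lemma per_int (u : (Fin d → ℝ) → ℝ) (hu : ∀ x k, u (x + Pi.single k 1) = u x)
    (x : Fin d → ℝ) (m : Fin d → ℤ) : u (x + fun i => (m i : ℝ)) = u x := by
  have key1 : ∀ (k : Fin d) (a : ℤ) (x : Fin d → ℝ), u (x + Pi.single k (a : ℝ)) = u x := by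
    intro k a
    induction a using Int.induction_on with
    | zero => intro x; simp
    | succ b ih =>
      intro x
      rw [show ((b : ℤ) + 1 : ℤ) = ((b : ℤ) + 1) from rfl, single_cast_add k (b : ℤ),
        ← add_assoc, hu, ih]
    | pred b ih =>
      intro x
      have h1 : (Pi.single k ((-(b : ℤ) - 1 : ℤ) : ℝ) : Fin d → ℝ) + Pi.single k 1
          = Pi.single k ((-(b : ℤ) : ℤ) : ℝ) := by
        funext j
        rcases eq_or_ne j k with rfl | hj
        · simp only [Pi.add_apply, Pi.single_eq_same]
          push_cast; ring
        · simp [Pi.single_apply, hj]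
      have h2 := hu (x + Pi.single k ((-(b : ℤ) - 1 : ℤ) : ℝ)) k
      rw [add_assoc, h1, ih] at h2
      exact h2.symm
  have key2 : ∀ (s : Finset (Fin d)) (x : Fin d → ℝ),
      u (x + ∑ k ∈ s, Pi.single k ((m k : ℝ))) = u x := by
    intro s
    induction s using Finset.induction_on with
    | empty => intro x; simp
    | @insert k s hk ih =>
      intro x
      rw [Finset.sum_insert hk,
        add_comm (Pi.single k ((m k : ℝ)) : Fin d → ℝ) (∑ j ∈ s, Pi.single j ((m j : ℝ))),
        ← add_assoc, key1, ih]
  rw [show (fun i => (m i : ℝ)) = ∑ k, Pi.single k ((m k : ℝ)) from (Finset.univ_sum_single _).symm]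
  exact key2 Finset.univ x

end GZL


lemma key_integral' {n : ℕ} (f : (Fin (n + 1) → ℝ) → ℝ)
    (F : Fin (n + 1) → (Fin (n + 1) → ℝ) → ℝ)
    (hfsm : ContDiff ℝ 1 f) (hFsm : ∀ A, ContDiff ℝ 1 (F A))
    (hfper : ∀ x k, f (x + Pi.single k 1) = f x)
    (hFper : ∀ A x k, F A (x + Pi.single k 1) = F A x)
    (hdiv0 : ∀ x, ∑ A, fderiv ℝ (F A) x (Pi.single A 1) = 0) :
    (∫ x in Icc (0 : Fin (n + 1) → ℝ) 1,
      ∑ A, fderiv ℝ f x (Pi.single A 1) * F A x) = 0 := by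
  set G : (Fin (n + 1) → ℝ) → Fin (n + 1) → ℝ := fun x A => f x * F A x with hG
  have hGsm : ∀ A, ContDiff ℝ 1 fun x => f x * F A x := fun A => hfsm.mul (hFsm A)
  have hGsm' : ContDiff ℝ 1 G := contDiff_pi.2 hGsm
  have hGdiff : Differentiable ℝ G := hGsm'.differentiable one_ne_zero
  have hfd : Differentiable ℝ f := hfsm.differentiable one_ne_zero
  have hFd : ∀ A, Differentiable ℝ (F A) := fun A => (hFsm A).differentiable one_ne_zero
  have hdivG : ∀ x, (∑ A, fderiv ℝ G x (Pi.single A 1) A)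
      = ∑ A, fderiv ℝ f x (Pi.single A 1) * F A x := by
    intro x
    have hpi : fderiv ℝ G x = ContinuousLinearMap.pi fun A => fderiv ℝ (fun y => f y * F A y) x :=
      fderiv_pi fun A => ((hGsm A).differentiable one_ne_zero).differentiableAt
    simp only [hpi, ContinuousLinearMap.pi_apply]
    have hterm : ∀ A, fderiv ℝ (fun y => f y * F A y) x (Pi.single A 1)
        = f x * fderiv ℝ (F A) x (Pi.single A 1) + F A x * fderiv ℝ f x (Pi.single A 1) := by
      intro A
      rw [fderiv_fun_mul (hfd x) (hFd A x)]
      simp [smul_eq_mul]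
    rw [Finset.sum_congr rfl fun A _ => hterm A, Finset.sum_add_distrib, ← Finset.mul_sum,
      hdiv0 x, mul_zero, zero_add]
    exact Finset.sum_congr rfl fun A _ => mul_comm _ _
  -- divergence theorem
  have hle : (0 : Fin (n + 1) → ℝ) ≤ 1 := fun i => zero_le_one
  have hcont : Continuous G := hGsm'.continuous
  have hdvg := integral_divergence_of_hasFDerivAt_off_countable (a := 0) (b := 1) hle
    G (fun x => fderiv ℝ G x) ∅ Set.countable_empty hcont.continuousOn
    (fun x _ => (hGdiff x).hasFDerivAt) ?_
  · rw [show (fun x => ∑ A, fderiv ℝ f x (Pi.single A 1) * F A x)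
        = fun x => ∑ A, fderiv ℝ G x (Pi.single A 1) A from funext fun x => (hdivG x).symm]
    rw [hdvg]
    refine Finset.sum_eq_zero fun i _ => sub_eq_zero.2 ?_
    refine setIntegral_congr_fun measurableSet_Icc fun y _ => ?_
    have hins : (Fin.insertNth i ((1 : Fin (n + 1) → ℝ) i) y : Fin (n + 1) → ℝ)
        = (Fin.insertNth i ((0 : Fin (n + 1) → ℝ) i) y : Fin (n + 1) → ℝ) + Pi.single i 1 := by
      funext j
      refine Fin.succAboveCases i ?_ ?_ j
      · simp
      · intro k
        simp [Fin.succAbove_ne i k, Pi.single_eq_of_ne (Fin.succAbove_ne i k)]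
    rw [hins, hG]
    simp only
    rw [hfper, hFper]
  · have : (fun x => ∑ A, fderiv ℝ G x (Pi.single A 1) A)
        = fun x => ∑ A, fderiv ℝ f x (Pi.single A 1) * F A x := funext hdivG
    rw [this]
    refine (Continuous.integrableOn_Icc ?_)
    refine continuous_finset_sum _ fun A _ => Continuous.mul ?_ ((hFsm A).continuous)
    exact ((hfsm.fderiv_right (m := 0) le_rfl).clm_apply contDiff_const).continuous



lemma zero_of_integral_zero' {d : ℕ} (g : (Fin d → ℝ) → ℝ) (hg : Continuous g)
    (hper : ∀ x k, g (x + Pi.single k 1) = g x) (hnn : ∀ x, 0 ≤ g x)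
    (hint : (∫ x in Icc (0 : Fin d → ℝ) 1, g x) = 0) : ∀ x, g x = 0 := by
  intro x
  by_contra hx
  have hgx : 0 < g x := lt_of_le_of_ne (hnn x) (Ne.symm hx)
  set y : Fin d → ℝ := fun i => Int.fract (x i) with hy
  have hyx : g y = g x := by
    have hxe : x = y + fun i => ((⌊x i⌋ : ℤ) : ℝ) := by
      funext i
      simp only [hy, Pi.add_apply]
      rw [Int.fract]
      ring
    rw [hxe, per_int g hper]
  have hy0 : ∀ i, 0 ≤ y i := fun i => Int.fract_nonneg _
  have hy1 : ∀ i, y i < 1 := fun i => Int.fract_lt_one _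
  have hgy : 0 < g y := hyx ▸ hgx
  obtain ⟨δ, hδpos, hδ⟩ : ∃ δ > 0, ∀ w, dist w y < δ → g y / 2 < g w := by
    have hop : IsOpen (g ⁻¹' Set.Ioi (g y / 2)) := isOpen_Ioi.preimage hg
    obtain ⟨δ, hδpos, hball⟩ := Metric.isOpen_iff.1 hop y (by simpa using half_lt_self hgy)
    exact ⟨δ, hδpos, fun w hw => hball hw⟩
  set z : Fin d → ℝ := fun i => min (y i + δ / 2) 1 with hz
  have hyz : ∀ i, y i < z i := fun i => lt_min (by linarith) (hy1 i)
  have hzle : ∀ i, z i ≤ y i + δ / 2 := fun i => min_le_left _ _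
  have hsub1 : Icc y z ⊆ Icc (0 : Fin d → ℝ) 1 := by
    intro w hw
    exact ⟨fun i => (hy0 i).trans (hw.1 i), fun i => (hw.2 i).trans (min_le_right _ _)⟩
  have hlb : ∀ w ∈ Icc y z, g y / 2 ≤ g w := by
    intro w hw
    refine (hδ w ?_).le
    rw [dist_pi_lt_iff hδpos]
    intro i
    rw [Real.dist_eq, abs_of_nonneg (sub_nonneg.2 (hw.1 i))]
    have := hw.2 i
    have := hzle i
    linarith
  have hint1 : IntegrableOn g (Icc (0 : Fin d → ℝ) 1) := hg.integrableOn_Icc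
  have hmono : (∫ w in Icc y z, g w) ≤ ∫ w in Icc (0 : Fin d → ℝ) 1, g w :=
    setIntegral_mono_set hint1 (Filter.Eventually.of_forall hnn) (hsub1.eventuallyLE)
  have hlow : g y / 2 * (volume (Icc y z)).toReal ≤ ∫ w in Icc y z, g w := by
    have := setIntegral_ge_of_const_le measurableSet_Icc
      (by exact (isCompact_Icc.measure_lt_top).ne) hlb (hint1.mono_set hsub1)
    rw [measureReal_def, smul_eq_mul, mul_comm] at this
    exact this
  have hvol : 0 < (volume (Icc y z)).toReal := by
    rw [Real.volume_Icc_pi_toReal (fun i => (hyz i).le)]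
    exact Finset.prod_pos fun i _ => sub_pos.2 (hyz i)
  rw [hint] at hmono
  have : 0 < g y / 2 * (volume (Icc y z)).toReal := mul_pos (half_pos hgy) hvol
  linarith

/-- On a compact Riemannian manifold without boundary (modelled
as the flat torus `ℝ^d / ℤ^d`, i.e. periodic fields on `ℝ^d`, with an
arbitrary smooth positive definite metric `h`), if `c₁ > 0`, `ε` is an
antisymmetric smooth (2,0)-tensor field, `c₂` smooth, `f` smooth, and
`div_h (c₁ ∇f − 8 c₂ ε(∇f,·)♯) = 0` everywhere, then `∇f = 0`. -/
theorem generalized_zeroth_law_elliptic_step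
    (d : ℕ)
    (h ε : (Fin d → ℝ) → Matrix (Fin d) (Fin d) ℝ)
    (c₁ c₂ f : (Fin d → ℝ) → ℝ)
    (hh : ∀ i j, ContDiff ℝ (⊤ : ℕ∞) fun x => h x i j)
    (hε : ∀ i j, ContDiff ℝ (⊤ : ℕ∞) fun x => ε x i j)
    (hc₁ : ContDiff ℝ (⊤ : ℕ∞) c₁) (hc₂ : ContDiff ℝ (⊤ : ℕ∞) c₂) (hf : ContDiff ℝ (⊤ : ℕ∞) f)
    -- periodicity: all fields live on the torus, which is compact and boundaryless
    (hhper : ∀ (x : Fin d → ℝ) (i j k : Fin d), h (x + Pi.single k 1) i j = h x i j)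
    (hεper : ∀ (x : Fin d → ℝ) (i j k : Fin d), ε (x + Pi.single k 1) i j = ε x i j)
    (hc₁per : ∀ (x : Fin d → ℝ) (k : Fin d), c₁ (x + Pi.single k 1) = c₁ x)
    (hc₂per : ∀ (x : Fin d → ℝ) (k : Fin d), c₂ (x + Pi.single k 1) = c₂ x)
    (hfper : ∀ (x : Fin d → ℝ) (k : Fin d), f (x + Pi.single k 1) = f x)
    (hpos : ∀ x, (h x).PosDef)
    (hc₁pos : ∀ x, 0 < c₁ x)
    (hanti : ∀ x i j, ε x i j = - ε x j i)
    -- divergence-free flux: div_h (c₁ ∇f − 8 c₂ ε(∇f,·)♯) = 0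
    (hdiv : ∀ x : Fin d → ℝ,
      (Real.sqrt (h x).det)⁻¹ *
        ∑ A, fderiv ℝ
          (fun y => Real.sqrt (h y).det *
            (c₁ y * ∑ B, (h y)⁻¹ A B * fderiv ℝ f y (Pi.single B 1)
              - 8 * c₂ y * ∑ B, ε y A B * fderiv ℝ f y (Pi.single B 1)))
          x (Pi.single A 1) = 0) :
    ∀ x : Fin d → ℝ, fderiv ℝ f x = 0 := by
  cases d with
  | zero =>
    intro x
    apply ContinuousLinearMap.ext
    intro v
    simp only [ContinuousLinearMap.zero_apply]
    rw [Subsingleton.elim v 0]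
    exact (fderiv ℝ f x).map_zero
  | succ n =>
    have hdet_pos : ∀ x, 0 < (h x).det := fun x => (hpos x).det_pos
    have hsq_pos : ∀ x, 0 < Real.sqrt (h x).det := fun x => Real.sqrt_pos.2 (hdet_pos x)
    have hdiv' : ∀ x, ∑ A, fderiv ℝ
        (fun y => Real.sqrt (h y).det *
          (c₁ y * ∑ B, (h y)⁻¹ A B * fderiv ℝ f y (Pi.single B 1)
            - 8 * c₂ y * ∑ B, ε y A B * fderiv ℝ f y (Pi.single B 1)))
        x (Pi.single A 1) = 0 := fun x =>
      (mul_eq_zero.1 (hdiv x)).resolve_left (inv_ne_zero (hsq_pos x).ne')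
    -- smoothness
    have hh1 : ∀ i j, ContDiff ℝ 1 fun x => h x i j := fun i j => (hh i j).of_le (by simp)
    have hsdet : ContDiff ℝ 1 fun x => (h x).det := contDiff_matrix_det' h hh1
    have hssqrt : ContDiff ℝ 1 fun x => Real.sqrt (h x).det := by
      rw [contDiff_iff_contDiffAt]
      intro x
      exact (Real.contDiffAt_sqrt (hdet_pos x).ne').comp x hsdet.contDiffAt
    have hsinv : ∀ A B, ContDiff ℝ 1 fun x => (h x)⁻¹ A B :=
      fun A B => contDiff_matrix_inv' h hh1 (fun x => (hdet_pos x).ne') A B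
    have hsdf : ∀ B : Fin (n+1), ContDiff ℝ 1 fun x => fderiv ℝ f x (Pi.single B 1) :=
      fun B => (hf.fderiv_right (m := 1) (WithTop.coe_le_coe.2 le_top)).clm_apply contDiff_const
    have hFsm : ∀ A, ContDiff ℝ 1 fun y => Real.sqrt (h y).det *
        (c₁ y * ∑ B, (h y)⁻¹ A B * fderiv ℝ f y (Pi.single B 1)
          - 8 * c₂ y * ∑ B, ε y A B * fderiv ℝ f y (Pi.single B 1)) := by
      intro A
      refine hssqrt.mul (ContDiff.sub ?_ ?_)
      · exact (hc₁.of_le (by simp)).mul (ContDiff.sum fun B _ => (hsinv A B).mul (hsdf B))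
      · exact (contDiff_const.mul (hc₂.of_le (by simp))).mul
          (ContDiff.sum fun B _ => ((hε A B).of_le (by simp)).mul (hsdf B))
    -- periodicity
    have hfd : Differentiable ℝ f := hf.differentiable (by simp)
    have hdfper : ∀ x k, fderiv ℝ f (x + Pi.single k 1) = fderiv ℝ f x := by
      intro x k
      have h2 : HasFDerivAt (fun y : Fin (n+1) → ℝ => y + Pi.single k 1)
          (ContinuousLinearMap.id ℝ (Fin (n+1) → ℝ)) x := (hasFDerivAt_id x).add_const _
      have h1 := ((hfd (x + Pi.single k 1)).hasFDerivAt).comp x h2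
      rw [ContinuousLinearMap.comp_id,
        show (f ∘ fun y : Fin (n+1) → ℝ => y + Pi.single k 1) = f from
          funext fun y => hfper y k] at h1
      exact h1.fderiv.symm
    have hmatper : ∀ x k, h (x + Pi.single k 1) = h x :=
      fun x k => Matrix.ext fun i j => hhper x i j k
    have hεmatper : ∀ x k, ε (x + Pi.single k 1) = ε x :=
      fun x k => Matrix.ext fun i j => hεper x i j k
    have hFper : ∀ (A : Fin (n+1)) (x : Fin (n+1) → ℝ) (k : Fin (n+1)),
        Real.sqrt (h (x + Pi.single k 1)).det *
          (c₁ (x + Pi.single k 1) * ∑ B, (h (x + Pi.single k 1))⁻¹ A B *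
              fderiv ℝ f (x + Pi.single k 1) (Pi.single B 1)
            - 8 * c₂ (x + Pi.single k 1) * ∑ B, ε (x + Pi.single k 1) A B *
              fderiv ℝ f (x + Pi.single k 1) (Pi.single B 1))
        = Real.sqrt (h x).det *
          (c₁ x * ∑ B, (h x)⁻¹ A B * fderiv ℝ f x (Pi.single B 1)
            - 8 * c₂ x * ∑ B, ε x A B * fderiv ℝ f x (Pi.single B 1)) := by
      intro A x k
      rw [hmatper, hεmatper, hdfper, hc₁per, hc₂per]
    have key := key_integral' f
      (fun A y => Real.sqrt (h y).det *
        (c₁ y * ∑ B, (h y)⁻¹ A B * fderiv ℝ f y (Pi.single B 1)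
          - 8 * c₂ y * ∑ B, ε y A B * fderiv ℝ f y (Pi.single B 1)))
      (hf.of_le (by simp)) hFsm hfper hFper hdiv'
    -- antisymmetry kills the ε term
    have hganti : ∀ x, (∑ A, fderiv ℝ f x (Pi.single A 1) *
        ∑ B, ε x A B * fderiv ℝ f x (Pi.single B 1)) = 0 := by
      intro x
      set v : Fin (n+1) → ℝ := fun B => fderiv ℝ f x (Pi.single B 1) with hv
      have h1 : (∑ A, v A * ∑ B, ε x A B * v B) = ∑ A, ∑ B, ε x A B * v A * v B := by
        refine Finset.sum_congr rfl fun A _ => ?_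
        rw [Finset.mul_sum]
        exact Finset.sum_congr rfl fun B _ => by ring
      have h2 : (∑ A, ∑ B, ε x B A * v A * v B) = ∑ A, ∑ B, ε x A B * v A * v B := by
        rw [Finset.sum_comm]
        exact Finset.sum_congr rfl fun A _ => Finset.sum_congr rfl fun B _ => by ring
      have h3 : (∑ A, ∑ B, ε x A B * v A * v B) = -∑ A, ∑ B, ε x B A * v A * v B := by
        rw [← Finset.sum_neg_distrib]
        refine Finset.sum_congr rfl fun A _ => ?_
        rw [← Finset.sum_neg_distrib]
        refine Finset.sum_congr rfl fun B _ => ?_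
        rw [hanti x A B]; ring
      rw [h1]
      rw [h2] at h3
      linarith
    -- pointwise identity
    have hgid : ∀ x, (∑ A, fderiv ℝ f x (Pi.single A 1) *
          (Real.sqrt (h x).det *
            (c₁ x * ∑ B, (h x)⁻¹ A B * fderiv ℝ f x (Pi.single B 1)
              - 8 * c₂ x * ∑ B, ε x A B * fderiv ℝ f x (Pi.single B 1))))
        = Real.sqrt (h x).det * c₁ x *
            ∑ A, fderiv ℝ f x (Pi.single A 1) *
              ∑ B, (h x)⁻¹ A B * fderiv ℝ f x (Pi.single B 1) := by
      intro x
      have expand : ∀ A : Fin (n+1), fderiv ℝ f x (Pi.single A 1) *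
          (Real.sqrt (h x).det *
            (c₁ x * ∑ B, (h x)⁻¹ A B * fderiv ℝ f x (Pi.single B 1)
              - 8 * c₂ x * ∑ B, ε x A B * fderiv ℝ f x (Pi.single B 1)))
          = Real.sqrt (h x).det * c₁ x * (fderiv ℝ f x (Pi.single A 1) *
              ∑ B, (h x)⁻¹ A B * fderiv ℝ f x (Pi.single B 1))
            - Real.sqrt (h x).det * (8 * c₂ x) * (fderiv ℝ f x (Pi.single A 1) *
              ∑ B, ε x A B * fderiv ℝ f x (Pi.single B 1)) := fun A => by ring
      rw [Finset.sum_congr rfl fun A _ => expand A, Finset.sum_sub_distrib,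
        ← Finset.mul_sum, ← Finset.mul_sum, hganti x, mul_zero, sub_zero]
    -- the nonnegative density
    have hQnn : ∀ x, 0 ≤ ∑ A, fderiv ℝ f x (Pi.single A 1) *
        ∑ B, (h x)⁻¹ A B * fderiv ℝ f x (Pi.single B 1) := by
      intro x
      have hps := ((hpos x).inv).posSemidef
      have h0 := hps.dotProduct_mulVec_nonneg (fun B => fderiv ℝ f x (Pi.single B 1))
      simpa [dotProduct, Matrix.mulVec] using h0
    have hgzero := zero_of_integral_zero'
      (fun x => Real.sqrt (h x).det * c₁ x *
          ∑ A, fderiv ℝ f x (Pi.single A 1) *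
            ∑ B, (h x)⁻¹ A B * fderiv ℝ f x (Pi.single B 1))
      (((hssqrt.mul (hc₁.of_le (by simp))).mul (ContDiff.sum fun A _ => (hsdf A).mul
        (ContDiff.sum fun B _ => (hsinv A B).mul (hsdf B)))).continuous)
      (by
        intro x k
        beta_reduce
        rw [hmatper, hdfper, hc₁per])
      (fun x => mul_nonneg (mul_nonneg (hsq_pos x).le (hc₁pos x).le) (hQnn x))
      (by
        rw [show (fun x => Real.sqrt (h x).det * c₁ x *
            ∑ A, fderiv ℝ f x (Pi.single A 1) *
              ∑ B, (h x)⁻¹ A B * fderiv ℝ f x (Pi.single B 1))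
          = fun x => ∑ A, fderiv ℝ f x (Pi.single A 1) *
            (Real.sqrt (h x).det *
              (c₁ x * ∑ B, (h x)⁻¹ A B * fderiv ℝ f x (Pi.single B 1)
                - 8 * c₂ x * ∑ B, ε x A B * fderiv ℝ f x (Pi.single B 1)))
          from funext fun x => (hgid x).symm]
        exact key)
    -- conclude pointwise
    intro x
    have hQ0 : (∑ A, fderiv ℝ f x (Pi.single A 1) *
        ∑ B, (h x)⁻¹ A B * fderiv ℝ f x (Pi.single B 1)) = 0 := by
      have hne : Real.sqrt (h x).det * c₁ x ≠ 0 := (mul_pos (hsq_pos x) (hc₁pos x)).ne'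
      have := hgzero x
      beta_reduce at this
      exact (mul_eq_zero.1 this).resolve_left hne
    have hv0 : ∀ B, fderiv ℝ f x (Pi.single B 1) = 0 := by
      by_contra hvne
      push_neg at hvne
      obtain ⟨B₀, hB₀⟩ := hvne
      have hvne' : (fun B => fderiv ℝ f x (Pi.single B 1)) ≠ 0 := by
        intro hcontra
        exact hB₀ (congrFun hcontra B₀)
      have hlt := ((hpos x).inv).dotProduct_mulVec_pos hvne'
      rw [show (star fun B => fderiv ℝ f x (Pi.single B 1))
          = fun B => fderiv ℝ f x (Pi.single B 1) from star_trivial _] at hlt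
      have : (0:ℝ) < ∑ A, fderiv ℝ f x (Pi.single A 1) *
          ∑ B, (h x)⁻¹ A B * fderiv ℝ f x (Pi.single B 1) := by
        simpa [dotProduct, Matrix.mulVec] using hlt
      linarith [hQ0]
    apply ContinuousLinearMap.ext
    intro w
    have hw : w = ∑ B, w B • (Pi.single B 1 : Fin (n+1) → ℝ) := by
      funext j
      rw [Finset.sum_apply]
      simp only [Pi.smul_apply, Pi.single_apply, smul_eq_mul, mul_ite, mul_one, mul_zero]
      simp
    rw [hw, map_sum]
    simp [hv0]
end

section
/- Let p₁, p₂ ≥ 1 with p₁ + p₂ ≥ 2, and let F, G : ℝ → ℝ be smooth. Then there exist unique real numbers a₁, …, a_{p₁+p₂−1} such that F^{(p₁)}·G^{(p₂)} = (d²/dv²)[ Σ_{j=1}^{p₁+p₂−1} a_j · F^{(p₁+p₂−1−j)} · G^{(j−1)} ] + R, where R is a linear combination of products F^{(q₁)}·G^{(q₂)} with q₁ + q₂ < p₁ + p₂, or with q₁ = 0, or with q₂ = 0. -/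
private lemma diffIter {F : ℝ → ℝ} (hF : ContDiff ℝ (⊤ : ℕ∞) F) (m : ℕ) :
    Differentiable ℝ (iteratedDeriv m F) :=
  hF.differentiable_iteratedDeriv m (WithTop.coe_lt_coe.2 (ENat.natCast_lt_top m))

private lemma diff_term {F G : ℝ → ℝ} (hF : ContDiff ℝ (⊤ : ℕ∞) F) (hG : ContDiff ℝ (⊤ : ℕ∞) G)
    (b : ℝ) (p q : ℕ) :
    Differentiable ℝ (fun w => b * iteratedDeriv p F w * iteratedDeriv q G w) :=
  ((differentiable_const b).mul (diffIter hF p)).mul (diffIter hG q)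

private lemma deriv_term {F G : ℝ → ℝ} (hF : ContDiff ℝ (⊤ : ℕ∞) F) (hG : ContDiff ℝ (⊤ : ℕ∞) G)
    (b : ℝ) (p q : ℕ) (v : ℝ) :
    deriv (fun w => b * iteratedDeriv p F w * iteratedDeriv q G w) v
      = b * iteratedDeriv (p+1) F v * iteratedDeriv q G v
        + b * iteratedDeriv p F v * iteratedDeriv (q+1) G v := by
  have h1 := (diffIter hF p) v
  have h2 := (diffIter hG q) v
  rw [show (fun w => b * iteratedDeriv p F w * iteratedDeriv q G w)
        = fun w => b * (iteratedDeriv p F w * iteratedDeriv q G w) from funext fun w => by ring]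
  rw [deriv_const_mul (d := fun w => iteratedDeriv p F w * iteratedDeriv q G w) _ (h1.mul h2), deriv_fun_mul h1 h2, ← iteratedDeriv_succ, ← iteratedDeriv_succ]
  ring

private lemma key_deriv2' (n : ℕ) (b : ℕ → ℝ) {F G : ℝ → ℝ}
    (hF : ContDiff ℝ (⊤ : ℕ∞) F) (hG : ContDiff ℝ (⊤ : ℕ∞) G) (v : ℝ) :
    iteratedDeriv 2 (fun w => ∑ j ∈ Finset.Icc 1 (n-1),
        b j * iteratedDeriv (n-1-j) F w * iteratedDeriv (j-1) G w) v
      = ∑ j ∈ Finset.Icc 1 (n-1),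
        (b j * iteratedDeriv (n-1-j+2) F v * iteratedDeriv (j-1) G v
          + 2 * (b j * iteratedDeriv (n-1-j+1) F v * iteratedDeriv (j-1+1) G v)
          + b j * iteratedDeriv (n-1-j) F v * iteratedDeriv (j-1+2) G v) := by
  have hd1 : deriv (fun w => ∑ j ∈ Finset.Icc 1 (n-1),
      b j * iteratedDeriv (n-1-j) F w * iteratedDeriv (j-1) G w)
      = fun w => ∑ j ∈ Finset.Icc 1 (n-1),
        (b j * iteratedDeriv (n-1-j+1) F w * iteratedDeriv (j-1) G w
          + b j * iteratedDeriv (n-1-j) F w * iteratedDeriv (j-1+1) G w) := by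
    funext w
    rw [deriv_fun_sum fun j _ => (diff_term hF hG (b j) _ _) w]
    exact Finset.sum_congr rfl fun j _ => deriv_term hF hG (b j) _ _ w
  rw [show (2:ℕ) = 1 + 1 from rfl, iteratedDeriv_succ, iteratedDeriv_one, hd1,
    deriv_fun_sum fun j _ => ((diff_term hF hG (b j) _ _).fun_add (diff_term hF hG (b j) _ _)) v]
  refine Finset.sum_congr rfl fun j _ => ?_
  rw [deriv_fun_add ((diff_term hF hG (b j) _ _) v) ((diff_term hF hG (b j) _ _) v),
    deriv_term hF hG (b j) _ _ v, deriv_term hF hG (b j) _ _ v,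
    show n-1-j+1+1 = n-1-j+2 from rfl, show j-1+1+1 = j-1+2 from rfl]
  ring

private noncomputable def aC (n p₂ : ℕ) (k : ℕ) : ℝ :=
  (-1)^(k+p₂) * ((min k p₂ * (n - max k p₂) : ℕ) : ℝ) / (n : ℝ)

private lemma aC_le {n p₂ k : ℕ} (h : k ≤ p₂) :
    aC n p₂ k = (-1)^(k+p₂) * ((k * (n - p₂) : ℕ) : ℝ) / (n : ℝ) := by
  rw [aC, min_eq_left h, max_eq_right h]

private lemma aC_ge {n p₂ k : ℕ} (h : p₂ ≤ k) :
    aC n p₂ k = (-1)^(k+p₂) * ((p₂ * (n - k) : ℕ) : ℝ) / (n : ℝ) := by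
  rw [aC, min_eq_right h, max_eq_left h]

private lemma aC_supp (n p₂ : ℕ) (hn : 2 ≤ n) (k : ℕ) (hk : k ∉ Finset.Icc 1 (n-1)) :
    aC n p₂ k = 0 := by
  simp only [Finset.mem_Icc, not_and_or, not_le] at hk
  rcases hk with hk | hk
  · have : k = 0 := by omega
    subst this
    simp [aC]
  · have hnk : n ≤ k := by omega
    have : n - max k p₂ = 0 := Nat.sub_eq_zero_of_le (le_trans hnk (le_max_left _ _))
    simp [aC, this]

private lemma aC_rec (n p₂ : ℕ) (hn : 2 ≤ n) (h1 : 1 ≤ p₂) (h2 : p₂ ≤ n - 1) (k : ℕ) :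
    aC n p₂ (k+1) + 2 * aC n p₂ k + aC n p₂ (k-1)
      = (if k = p₂ then 1 else 0) + (if k = 0 then aC n p₂ 1 else 0)
        + (if k = n then aC n p₂ (n-1) else 0) := by
  have hn0 : (n:ℝ) ≠ 0 := by positivity
  rcases lt_trichotomy k p₂ with hk | rfl | hk
  · -- k < p₂
    rw [if_neg (by omega), if_neg (show k ≠ n by omega)]
    rw [aC_le (show k+1 ≤ p₂ by omega), aC_le (show k ≤ p₂ by omega),
      aC_le (show k-1 ≤ p₂ by omega)]
    rcases Nat.eq_zero_or_pos k with rfl | hkpos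
    · rw [if_pos rfl, aC_le h1]
      norm_num
    · rw [if_neg (by omega)]
      obtain ⟨m, rfl⟩ : ∃ m, k = m + 1 := ⟨k - 1, by omega⟩
      have hc1 : ((m+1+1) * (n - p₂) : ℕ) = ((m:ℝ)+2) * ((n:ℝ) - (p₂:ℝ)) := by
        push_cast [Nat.cast_sub (show p₂ ≤ n by omega)]; ring
      have hc2 : ((m+1) * (n - p₂) : ℕ) = ((m:ℝ)+1) * ((n:ℝ) - (p₂:ℝ)) := by
        push_cast [Nat.cast_sub (show p₂ ≤ n by omega)]; ring
      have hc3 : ((m+1-1) * (n - p₂) : ℕ) = (m:ℝ) * ((n:ℝ) - (p₂:ℝ)) := by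
        push_cast [Nat.cast_sub (show p₂ ≤ n by omega)]; ring
      rw [hc1, hc2, show m+1-1 = m from rfl] at *
      rw [hc3]
      rw [show m+1+1+p₂ = (m+p₂)+2 by ring, show m+1+p₂ = (m+p₂)+1 by ring]
      rw [pow_succ, pow_succ]
      ring
  · -- k = p₂
    rw [if_pos rfl, if_neg (by omega), if_neg (show k ≠ n by omega)]
    rw [aC_ge (show k ≤ k+1 by omega), aC_le (le_refl k), aC_le (show k-1 ≤ k by omega)]
    obtain ⟨m, rfl⟩ : ∃ m, k = m + 1 := ⟨k - 1, by omega⟩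
    have hc1 : ((m+1) * (n - (m+1+1)) : ℕ) = ((m:ℝ)+1) * ((n:ℝ) - (m:ℝ) - 2) := by
      push_cast [Nat.cast_sub (show m+1+1 ≤ n by omega)]; ring
    have hc2 : ((m+1) * (n - (m+1)) : ℕ) = ((m:ℝ)+1) * ((n:ℝ) - (m:ℝ) - 1) := by
      push_cast [Nat.cast_sub (show m+1 ≤ n by omega)]; ring
    have hc3 : ((m+1-1) * (n - (m+1)) : ℕ) = (m:ℝ) * ((n:ℝ) - (m:ℝ) - 1) := by
      push_cast [Nat.cast_sub (show m+1 ≤ n by omega)]; ring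
    rw [show m+1-1 = m from rfl] at *
    rw [hc1, hc2, hc3]
    rw [show m+1+1+(m+1) = 2*(m+1)+1 by ring, show m+1+(m+1) = 2*(m+1) by ring,
      show m+(m+1) = 2*m+1 by ring]
    rw [pow_succ, pow_succ, pow_mul, pow_mul, neg_one_sq, one_pow, one_pow]
    field_simp
    ring
  · -- p₂ < k
    rw [if_neg (by omega), if_neg (by omega)]
    rw [aC_ge (show p₂ ≤ k+1 by omega), aC_ge (show p₂ ≤ k by omega),
      aC_ge (show p₂ ≤ k-1 by omega)]
    rcases lt_trichotomy k n with hkn | rfl | hkn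
    · -- p₂ < k ≤ n-1
      rw [if_neg (by omega)]
      obtain ⟨m, rfl⟩ : ∃ m, k = m + 1 := ⟨k - 1, by omega⟩
      have hc1 : (p₂ * (n - (m+1+1)) : ℕ) = (p₂:ℝ) * ((n:ℝ) - (m:ℝ) - 2) := by
        push_cast [Nat.cast_sub (show m+1+1 ≤ n by omega)]; ring
      have hc2 : (p₂ * (n - (m+1)) : ℕ) = (p₂:ℝ) * ((n:ℝ) - (m:ℝ) - 1) := by
        push_cast [Nat.cast_sub (show m+1 ≤ n by omega)]; ring
      have hc3 : (p₂ * (n - m) : ℕ) = (p₂:ℝ) * ((n:ℝ) - (m:ℝ)) := by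
        push_cast [Nat.cast_sub (show m ≤ n by omega)]; ring
      rw [show m+1-1 = m from rfl, hc1, hc2, hc3]
      rw [show m+1+1+p₂ = (m+p₂)+2 by ring, show m+1+p₂ = (m+p₂)+1 by ring]
      rw [pow_succ, pow_succ]
      ring
    · -- k = n
      rw [if_pos rfl]
      rw [show k - (k+1) = 0 from by omega, show k - k = 0 from by omega,
        aC_ge (show p₂ ≤ k - 1 from h2)]
      simp
    · -- k > n
      rw [if_neg (by omega)]
      rw [show n - (k+1) = 0 from by omega, show n - k = 0 from by omega,
        show n - (k-1) = 0 from by omega]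
      simp

private lemma iter_pow (N m : ℕ) :
    iteratedDeriv m (fun x : ℝ => x ^ N) = fun x => (N.descFactorial m : ℝ) * x ^ (N - m) := by
  induction m with
  | zero => funext x; simp
  | succ m ih =>
    rw [iteratedDeriv_succ, ih]
    funext x
    rw [deriv_const_mul _ (differentiableAt_pow _), deriv_pow_field]
    rw [Nat.descFactorial_succ, show N - m - 1 = N - (m+1) from by omega]
    rcases le_or_gt m N with h | h
    · push_cast [Nat.cast_sub h]
      ring
    · rw [Nat.descFactorial_eq_zero_iff_lt.2 h, show N - m = 0 from by omega]
      simp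

private lemma iter_pow_zero (N m : ℕ) :
    iteratedDeriv m (fun x : ℝ => x ^ N) 0 = if m = N then (N.factorial : ℝ) else 0 := by
  rw [iter_pow]
  rcases lt_trichotomy m N with h | rfl | h
  · rw [if_neg (by omega)]
    simp [zero_pow (show N - m ≠ 0 from by omega)]
  · simp [Nat.descFactorial_self]
  · rw [if_neg (by omega), Nat.descFactorial_eq_zero_iff_lt.2 h]
    simp

private lemma reindex (n : ℕ) (hn : 2 ≤ n) (a : ℕ → ℝ)
    (ha : ∀ j, j ∉ Finset.Icc 1 (n-1) → a j = 0) (B : ℕ → ℝ) :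
    ∑ j ∈ Finset.Icc 1 (n-1), (a j * B (j-1) + 2 * (a j * B j) + a j * B (j+1))
      = ∑ k ∈ Finset.range (n+1), (a (k+1) + 2 * a k + a (k-1)) * B k := by
  have subs1 : Finset.Icc 1 (n-1) ⊆ Finset.range (n+2) := by
    intro x hx; simp only [Finset.mem_Icc, Finset.mem_range] at *; omega
  have subs2 : Finset.Icc 1 (n-1) ⊆ Finset.range (n+1) := by
    intro x hx; simp only [Finset.mem_Icc, Finset.mem_range] at *; omega
  have subs3 : Finset.Icc 1 (n-1) ⊆ Finset.range n := by
    intro x hx; simp only [Finset.mem_Icc, Finset.mem_range] at *; omega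
  have E1 : ∑ j ∈ Finset.Icc 1 (n-1), a j * B (j-1)
      = ∑ k ∈ Finset.range (n+1), a (k+1) * B k := by
    rw [Finset.sum_subset subs1 (fun x _ hx => by rw [ha x hx, zero_mul]),
      Finset.sum_range_succ']
    rw [ha 0 (by simp), zero_mul, add_zero]
    exact Finset.sum_congr rfl fun k _ => by rw [Nat.add_sub_cancel]
  have E2 : ∑ j ∈ Finset.Icc 1 (n-1), 2 * (a j * B j)
      = ∑ k ∈ Finset.range (n+1), 2 * (a k * B k) := by
    refine Finset.sum_subset subs2 (fun x _ hx => by rw [ha x hx]; ring)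
  have E3 : ∑ j ∈ Finset.Icc 1 (n-1), a j * B (j+1)
      = ∑ k ∈ Finset.range (n+1), a (k-1) * B k := by
    rw [Finset.sum_range_succ' (fun k => a (k-1) * B k) n]
    rw [show (0:ℕ)-1 = 0 from rfl, ha 0 (by simp), zero_mul, add_zero]
    rw [Finset.sum_subset subs3 (fun x _ hx => by rw [ha x hx, zero_mul])]
    exact Finset.sum_congr rfl fun k _ => by rw [Nat.add_sub_cancel]
  calc ∑ j ∈ Finset.Icc 1 (n-1), (a j * B (j-1) + 2 * (a j * B j) + a j * B (j+1))
      = (∑ j ∈ Finset.Icc 1 (n-1), a j * B (j-1))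
        + (∑ j ∈ Finset.Icc 1 (n-1), 2 * (a j * B j))
        + (∑ j ∈ Finset.Icc 1 (n-1), a j * B (j+1)) := by
        rw [← Finset.sum_add_distrib, ← Finset.sum_add_distrib]
    _ = (∑ k ∈ Finset.range (n+1), a (k+1) * B k)
        + (∑ k ∈ Finset.range (n+1), 2 * (a k * B k))
        + (∑ k ∈ Finset.range (n+1), a (k-1) * B k) := by rw [E1, E2, E3]
    _ = ∑ k ∈ Finset.range (n+1), (a (k+1) + 2 * a k + a (k-1)) * B k := by
        rw [← Finset.sum_add_distrib, ← Finset.sum_add_distrib]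
        exact Finset.sum_congr rfl fun k _ => by ring

private lemma tridiag_zero (n : ℕ) (hn : 2 ≤ n) (d : ℕ → ℝ)
    (h0 : ∀ j, j ∉ Finset.Icc 1 (n-1) → d j = 0)
    (hrec : ∀ k, 1 ≤ k → k ≤ n-1 → d (k-1) + 2 * d k + d (k+1) = 0) :
    ∀ j, d j = 0 := by
  have hd0 : d 0 = 0 := h0 0 (by simp)
  have claim : ∀ m, m + 1 ≤ n →
      d m = (-1:ℝ)^(m+1) * m * d 1 ∧ d (m+1) = (-1:ℝ)^m * (m+1) * d 1 := by
    intro m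
    induction m with
    | zero => intro _; constructor <;> simp [hd0]
    | succ m ih =>
      intro hm
      obtain ⟨ih1, ih2⟩ := ih (by omega)
      constructor
      · rw [ih2]
        push_cast
        ring
      · have hr := hrec (m+1) (by omega) (by omega)
        rw [Nat.add_sub_cancel] at hr
        have : d (m+1+1) = - d m - 2 * d (m+1) := by linarith
        rw [this, ih1, ih2]
        push_cast
        ring
  have hd1 : d 1 = 0 := by
    have h := (claim (n-1) (by omega)).2
    rw [show n-1+1 = n from by omega] at h
    rw [h0 n (by simp only [Finset.mem_Icc]; omega)] at h
    have hne : ((-1:ℝ))^(n-1) ≠ 0 := by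
      apply pow_ne_zero; norm_num
    have hnn : ((n-1:ℕ):ℝ) + 1 ≠ 0 := by positivity
    rcases mul_eq_zero.1 h.symm with h' | h'
    · exact absurd (mul_eq_zero.1 h') (by push_neg; exact ⟨hne, hnn⟩)
    · exact h'
  intro j
  by_cases hj : j ∈ Finset.Icc 1 (n-1)
  · simp only [Finset.mem_Icc] at hj
    have := (claim j (by omega)).1
    rw [this, hd1]; ring
  · exact h0 j hj


/-- For `p₁, p₂ ≥ 1` (so `p₁ + p₂ ≥ 2`), there exist unique real
numbers `a₁, …, a_{p₁+p₂−1}` such that for all smooth `F, G : ℝ → ℝ`: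
`F^{(p₁)} G^{(p₂)} = (d²/dv²)[∑_{j=1}^{p₁+p₂−1} aⱼ F^{(p₁+p₂−1−j)} G^{(j−1)}] + R`,
where `R` is a linear combination of products `F^{(q₁)} G^{(q₂)}` with
`q₁ + q₂ < p₁ + p₂`, or `q₁ = 0`, or `q₂ = 0`. -/
theorem total_second_derivative_decomposition
    (p₁ p₂ : ℕ) (hp₁ : 1 ≤ p₁) (hp₂ : 1 ≤ p₂) :
    ∃! a : ℕ → ℝ,
      (∀ j, j ∉ Finset.Icc 1 (p₁ + p₂ - 1) → a j = 0) ∧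
      ∀ F G : ℝ → ℝ, ContDiff ℝ (⊤ : ℕ∞) F → ContDiff ℝ (⊤ : ℕ∞) G →
        ∃ (T : Finset (ℕ × ℕ)) (c : ℕ × ℕ → ℝ),
          (∀ q ∈ T, q.1 + q.2 < p₁ + p₂ ∨ q.1 = 0 ∨ q.2 = 0) ∧
          ∀ v : ℝ,
            iteratedDeriv p₁ F v * iteratedDeriv p₂ G v =
              iteratedDeriv 2
                (fun w => ∑ j ∈ Finset.Icc 1 (p₁ + p₂ - 1),
                  a j * iteratedDeriv (p₁ + p₂ - 1 - j) F w
                    * iteratedDeriv (j - 1) G w) v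
              + ∑ q ∈ T, c q * iteratedDeriv q.1 F v * iteratedDeriv q.2 G v := by
  have hn2 : 2 ≤ p₁ + p₂ := by omega
  refine ⟨aC (p₁ + p₂) p₂, ⟨fun j hj => aC_supp (p₁ + p₂) p₂ hn2 j hj, ?_⟩, ?_⟩
  · -- existence
    intro F G hF hG
    set n := p₁ + p₂ with hn
    have hnz : n ≠ 0 := by omega
    refine ⟨{((n:ℕ), (0:ℕ)), ((0:ℕ), (n:ℕ))},
      fun q => if q = (n, 0) then -(aC n p₂ 1) else -(aC n p₂ (n-1)), ?_, ?_⟩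
    · intro q hq
      simp only [Finset.mem_insert, Finset.mem_singleton] at hq
      rcases hq with rfl | rfl
      · right; right; rfl
      · right; left; rfl
    · intro v
      rw [key_deriv2' n (aC n p₂) hF hG v]
      set B : ℕ → ℝ := fun m => iteratedDeriv (n - m) F v * iteratedDeriv m G v with hB
      have h1 : ∑ j ∈ Finset.Icc 1 (n-1),
          (aC n p₂ j * iteratedDeriv (n-1-j+2) F v * iteratedDeriv (j-1) G v
            + 2 * (aC n p₂ j * iteratedDeriv (n-1-j+1) F v * iteratedDeriv (j-1+1) G v)
            + aC n p₂ j * iteratedDeriv (n-1-j) F v * iteratedDeriv (j-1+2) G v)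
          = ∑ j ∈ Finset.Icc 1 (n-1),
            (aC n p₂ j * B (j-1) + 2 * (aC n p₂ j * B j) + aC n p₂ j * B (j+1)) := by
        refine Finset.sum_congr rfl fun j hj => ?_
        simp only [Finset.mem_Icc] at hj
        simp only [hB]
        rw [show n-1-j+2 = n-(j-1) from by omega, show n-1-j+1 = n-j from by omega,
          show j-1+1 = j from by omega, show j-1+2 = j+1 from by omega,
          show n-1-j = n-(j+1) from by omega]
        ring
      have h2 := reindex n hn2 (aC n p₂) (aC_supp n p₂ hn2) B
      have h3 : ∑ k ∈ Finset.range (n+1),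
          (aC n p₂ (k+1) + 2 * aC n p₂ k + aC n p₂ (k-1)) * B k
          = B p₂ + aC n p₂ 1 * B 0 + aC n p₂ (n-1) * B n := by
        have hcg : ∀ k ∈ Finset.range (n+1),
            (aC n p₂ (k+1) + 2 * aC n p₂ k + aC n p₂ (k-1)) * B k
            = (if k = p₂ then B k else 0) + (if k = 0 then aC n p₂ 1 * B k else 0)
              + (if k = n then aC n p₂ (n-1) * B k else 0) := by
          intro k _
          rw [aC_rec n p₂ hn2 hp₂ (by omega) k]
          split_ifs <;> ring
        rw [Finset.sum_congr rfl hcg, Finset.sum_add_distrib, Finset.sum_add_distrib,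
          Finset.sum_ite_eq' (Finset.range (n+1)) p₂ B,
          Finset.sum_ite_eq' (Finset.range (n+1)) 0 (fun k => aC n p₂ 1 * B k),
          Finset.sum_ite_eq' (Finset.range (n+1)) n (fun k => aC n p₂ (n-1) * B k)]
        rw [if_pos (by simp only [Finset.mem_range]; omega),
          if_pos (by simp only [Finset.mem_range]; omega),
          if_pos (by simp only [Finset.mem_range]; omega)]
      rw [h1, h2, h3]
      rw [Finset.sum_insert (by simp [Prod.ext_iff]; omega), Finset.sum_singleton]
      show iteratedDeriv p₁ F v * iteratedDeriv p₂ G v =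
        B p₂ + aC n p₂ 1 * B 0 + aC n p₂ (n-1) * B n +
        ((if ((n:ℕ),(0:ℕ)) = ((n:ℕ),(0:ℕ)) then -aC n p₂ 1 else -aC n p₂ (n-1))
            * iteratedDeriv n F v * iteratedDeriv 0 G v +
         (if ((0:ℕ),(n:ℕ)) = ((n:ℕ),(0:ℕ)) then -aC n p₂ 1 else -aC n p₂ (n-1))
            * iteratedDeriv 0 F v * iteratedDeriv n G v)
      rw [if_pos rfl, if_neg (by simp [Prod.ext_iff]; omega)]
      simp only [hB]
      rw [show n - p₂ = p₁ from by omega, Nat.sub_zero, Nat.sub_self]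
      ring
  · -- uniqueness
    rintro a' ⟨ha's, ha'p⟩
    set n := p₁ + p₂ with hn
    have key : ∀ k, 1 ≤ k → k ≤ n-1 →
        a' (k+1) + 2 * a' k + a' (k-1) = (if k = p₂ then (1:ℝ) else 0) := by
      intro k hk1 hk2
      have hFc : ContDiff ℝ (⊤ : ℕ∞) (fun x : ℝ => x ^ (n - k)) := contDiff_id.pow _
      have hGc : ContDiff ℝ (⊤ : ℕ∞) (fun x : ℝ => x ^ k) := contDiff_id.pow _
      obtain ⟨T, c, hc, heq⟩ := ha'p (fun x => x ^ (n - k)) (fun x => x ^ k) hFc hGc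
      have h0 := heq 0
      rw [key_deriv2' n a' hFc hGc 0] at h0
      have hL : iteratedDeriv p₁ (fun x : ℝ => x ^ (n-k)) 0
          * iteratedDeriv p₂ (fun x : ℝ => x ^ k) 0
          = if k = p₂ then ((n-k).factorial : ℝ) * (k.factorial : ℝ) else 0 := by
        rw [iter_pow_zero, iter_pow_zero]
        rcases eq_or_ne k p₂ with rfl | hne
        · rw [if_pos (show p₁ = n - k from by omega), if_pos rfl, if_pos rfl]
        · rw [if_neg (show p₂ ≠ k from Ne.symm hne), if_neg hne, mul_zero]
      have hterm : ∀ j ∈ Finset.Icc 1 (n-1),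
          (a' j * iteratedDeriv (n-1-j+2) (fun x : ℝ => x ^ (n-k)) 0
              * iteratedDeriv (j-1) (fun x : ℝ => x ^ k) 0
            + 2 * (a' j * iteratedDeriv (n-1-j+1) (fun x : ℝ => x ^ (n-k)) 0
              * iteratedDeriv (j-1+1) (fun x : ℝ => x ^ k) 0)
            + a' j * iteratedDeriv (n-1-j) (fun x : ℝ => x ^ (n-k)) 0
              * iteratedDeriv (j-1+2) (fun x : ℝ => x ^ k) 0)
          = ((if j = k+1 then a' j else 0) + 2 * (if j = k then a' j else 0)
              + (if j = k-1 then a' j else 0)) * (((n-k).factorial : ℝ) * (k.factorial : ℝ)) := by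
        intro j hj
        simp only [Finset.mem_Icc] at hj
        rw [iter_pow_zero, iter_pow_zero, iter_pow_zero, iter_pow_zero, iter_pow_zero,
          iter_pow_zero]
        have e1 : (n-1-j+2 = n-k) = (j = k+1) := by rw [eq_iff_iff]; omega
        have e1' : (j-1 = k) = (j = k+1) := by rw [eq_iff_iff]; omega
        have e2 : (n-1-j+1 = n-k) = (j = k) := by rw [eq_iff_iff]; omega
        have e2' : (j-1+1 = k) = (j = k) := by rw [eq_iff_iff]; omega
        have e3 : (n-1-j = n-k) = (j = k-1) := by rw [eq_iff_iff]; omega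
        have e3' : (j-1+2 = k) = (j = k-1) := by rw [eq_iff_iff]; omega
        simp only [e1, e1', e2, e2', e3, e3']
        split_ifs <;> ring
      have hS : ∑ j ∈ Finset.Icc 1 (n-1),
          (a' j * iteratedDeriv (n-1-j+2) (fun x : ℝ => x ^ (n-k)) 0
              * iteratedDeriv (j-1) (fun x : ℝ => x ^ k) 0
            + 2 * (a' j * iteratedDeriv (n-1-j+1) (fun x : ℝ => x ^ (n-k)) 0
              * iteratedDeriv (j-1+1) (fun x : ℝ => x ^ k) 0)
            + a' j * iteratedDeriv (n-1-j) (fun x : ℝ => x ^ (n-k)) 0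
              * iteratedDeriv (j-1+2) (fun x : ℝ => x ^ k) 0)
          = (a' (k+1) + 2 * a' k + a' (k-1)) * (((n-k).factorial : ℝ) * (k.factorial : ℝ)) := by
        rw [Finset.sum_congr rfl hterm, ← Finset.sum_mul]
        congr 1
        rw [Finset.sum_add_distrib, Finset.sum_add_distrib, ← Finset.mul_sum,
          Finset.sum_ite_eq' (Finset.Icc 1 (n-1)) (k+1) a',
          Finset.sum_ite_eq' (Finset.Icc 1 (n-1)) k a',
          Finset.sum_ite_eq' (Finset.Icc 1 (n-1)) (k-1) a']
        have hfix : ∀ t, (if t ∈ Finset.Icc 1 (n-1) then a' t else 0) = a' t := by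
          intro t
          split_ifs with h
          · rfl
          · exact (ha's t h).symm
        rw [hfix, hfix, hfix]
      have hT : ∑ q ∈ T, c q * iteratedDeriv q.1 (fun x : ℝ => x ^ (n-k)) 0
          * iteratedDeriv q.2 (fun x : ℝ => x ^ k) 0 = 0 := by
        refine Finset.sum_eq_zero fun q hq => ?_
        rw [iter_pow_zero, iter_pow_zero]
        split_ifs with h1 h2
        case _ =>
          exfalso
          have hkn : k ≤ n := by omega
          have hq1 : q.1 + q.2 = n := by
            rw [h1, h2]
            omega
          rcases hc q hq with h | h | h
          · omega
          · rw [h] at h1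
            omega
          · rw [h] at h2
            omega
        all_goals ring
      rw [hL, hS, hT, add_zero] at h0
      have hC : (((n-k).factorial : ℝ) * (k.factorial : ℝ)) ≠ 0 :=
        mul_ne_zero (Nat.cast_ne_zero.2 (Nat.factorial_ne_zero _))
          (Nat.cast_ne_zero.2 (Nat.factorial_ne_zero _))
      refine mul_right_cancel₀ hC ?_
      rw [← h0]
      split_ifs <;> ring
    have hzero := tridiag_zero n hn2 (fun j => a' j - aC n p₂ j)
      (fun j hj => by
        show a' j - aC n p₂ j = 0
        rw [ha's j hj, aC_supp n p₂ hn2 j hj]; ring)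
      (fun k hk1 hk2 => by
        have h1 := key k hk1 hk2
        have h2 := aC_rec n p₂ hn2 hp₂ (by omega) k
        rw [if_neg (show k ≠ 0 from by omega), if_neg (show k ≠ n from by omega),
          add_zero, add_zero] at h2
        show a' (k-1) - aC n p₂ (k-1) + 2 * (a' k - aC n p₂ k)
          + (a' (k+1) - aC n p₂ (k+1)) = 0
        linarith [h1, h2])
    funext j
    have hj0 : a' j - aC n p₂ j = 0 := hzero j
    linarith [hj0]
end
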